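/- Let d ≥ 1, let z be a standard Gaussian vector on ℝ^d, let v ∈ ℝ^d with v ≠ 0, and let R_v denote the reflection along v, i.e., R_v z = z − 2⟨v, z⟩v/‖v‖². Suppose f : ℝ^d → ℝ is measurable and satisfies f(R_v z) = f(z) for all z ∈ ℝ^d. Then for every real-analytic function F : ℝ → ℝ such that z ↦ F(f(z))⟨v, z⟩ is integrable with respect to the standard Gaussian measure, E[F(f(z))⟨v, z⟩] = 0. -/

import Mathlib

/-!
The reflection `R_v` is a linear isometry, so it preserves the standard Gaussian measure. Since
`f ∘ R_v = f` and `⟨v, R_v z⟩ = -⟨v, z⟩`, the integrand `F (f z) ⟨v, z⟩` changes sign under `R_v`;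
its integral therefore equals its own negative.
-/

open MeasureTheory ProbabilityTheory

/-- The standard Gaussian measure on `ℝ^d` (i.i.d. `N(0,1)` coordinates). -/
noncomputable def stdGaussian (d : ℕ) : Measure (EuclideanSpace ℝ (Fin d)) :=
  (Measure.pi fun _ => gaussianReal 0 1).map (WithLp.toLp 2)

/-- The reflection along the direction `v`: `R_v z = z - 2⟨v,z⟩v/‖v‖²`. -/
noncomputable def reflAlong {d : ℕ} (v : EuclideanSpace ℝ (Fin d)) :
    EuclideanSpace ℝ (Fin d) → EuclideanSpace ℝ (Fin d) :=
  fun z => z - (2 * (inner ℝ v z : ℝ) / ‖v‖ ^ 2) • v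

theorem MeasureTheory.MeasurePreserving.integral_eq_zero_of_comp_eq_neg {α G : Type*}
    [MeasurableSpace α] [NormedAddCommGroup G] [NormedSpace ℝ G] {μ : Measure α} {e : α ≃ᵐ α}
    (he : MeasurePreserving e μ μ) {g : α → G} (hg : ∀ x, g (e x) = -g x) :
    ∫ x, g x ∂μ = 0 := by
  have : IsAddTorsionFree G := .of_isTorsionFree ℝ G
  simp_rw [← self_eq_neg, ← integral_neg, ← hg, he.integral_comp']

theorem ProbabilityTheory.measurePreserving_stdGaussian {E : Type*} [NormedAddCommGroup E]
    [InnerProductSpace ℝ E] [FiniteDimensional ℝ E] [MeasurableSpace E] [BorelSpace E]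
    (e : E ≃ₗᵢ[ℝ] E) :
    MeasurePreserving e.toHomeomorph.toMeasurableEquiv
      (ProbabilityTheory.stdGaussian E) (ProbabilityTheory.stdGaussian E) :=
  ⟨e.continuous.measurable, stdGaussian_map e⟩

theorem stdGaussian_eq_stdGaussian_euclideanSpace (d : ℕ) :
    stdGaussian d = ProbabilityTheory.stdGaussian (EuclideanSpace ℝ (Fin d)) :=
  map_pi_eq_stdGaussian

theorem reflAlong_eq_reflection {d : ℕ} (v : EuclideanSpace ℝ (Fin d)) :
    reflAlong v = (ℝ ∙ v)ᗮ.reflection := by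
  ext1 z
  rw [Submodule.reflection_orthogonal_apply, Submodule.reflection_singleton_apply, neg_sub,
    reflAlong, two_smul, ← add_smul, ← two_mul, mul_div_assoc]
  rfl

theorem inner_reflection_orthogonal_singleton {E : Type*} [NormedAddCommGroup E]
    [InnerProductSpace ℝ E] (v z : E) :
    inner ℝ v ((ℝ ∙ v)ᗮ.reflection z) = -inner ℝ v z := by
  rw [← LinearIsometryEquiv.inner_map_map (ℝ ∙ v)ᗮ.reflection,
    Submodule.reflection_orthogonalComplement_singleton_eq_neg, Submodule.reflection_reflection,
    inner_neg_left]

theorem even_symmetric_direction_is_hard_general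
    (d : ℕ)
    (v : EuclideanSpace ℝ (Fin d))
    (f : EuclideanSpace ℝ (Fin d) → ℝ)
    (hsym : ∀ z, f (reflAlong v z) = f z) :
    ∀ F : ℝ → ℝ, (∀ x, AnalyticAt ℝ F x) →
      Integrable (fun z => F (f z) * (inner ℝ v z : ℝ)) (stdGaussian d) →
      ∫ z, F (f z) * (inner ℝ v z : ℝ) ∂(stdGaussian d) = 0 := by
  intro F _ _
  rw [reflAlong_eq_reflection] at hsym
  rw [stdGaussian_eq_stdGaussian_euclideanSpace]
  refine (measurePreserving_stdGaussian (ℝ ∙ v)ᗮ.reflection).integral_eq_zero_of_comp_eq_neg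
    fun z => ?_
  simp only [Homeomorph.toMeasurableEquiv_coe, LinearIsometryEquiv.coe_toHomeomorph, hsym,
    inner_reflection_orthogonal_singleton, mul_neg]

/-- Even-symmetric directions are hard: if `f (R_v z) = f z` for all `z`, then no analytic
transformation of the output of `f` correlates linearly with `v` under the standard Gaussian. -/
theorem even_symmetric_direction_is_hard
    (d : ℕ) (hd : 1 ≤ d)
    (v : EuclideanSpace ℝ (Fin d)) (hv : v ≠ 0)
    (f : EuclideanSpace ℝ (Fin d) → ℝ) (hf : Measurable f)
    (hsym : ∀ z, f (reflAlong v z) = f z) :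
    ∀ F : ℝ → ℝ, (∀ x, AnalyticAt ℝ F x) →
      Integrable (fun z => F (f z) * (inner ℝ v z : ℝ)) (stdGaussian d) →
      ∫ z, F (f z) * (inner ℝ v z : ℝ) ∂(stdGaussian d) = 0 :=
  even_symmetric_direction_is_hard_general d v f hsym
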